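/- arXiv:0711.2057 — 2 statements merged into one kernel-verified Lean document; each statement's English description precedes it below -/
import Mathlib

section
/- Let A be a commutative Banach algebra with a bounded approximate identity, and let M be a Banach A-module on which the approximate identity acts as an approximate identity (i.e., e_α · m → m for all m ∈ M). Then every element of M factors as a · m with a ∈ A and m ∈ M (Cohen factorization). -/
/-! Pass to the unitization `A₁ = ℂ ⊕ A` with the ℓ¹ norm (the default unitization norm needs
`A` to be regular), which acts contractively on `M` by `(λ, a) • m = λ m + a m`. With
`α = 1 / (2 (C + 2))` build units `uₙ = (1 - α)ⁿ + aₙ` of `A₁` with `‖uₙ⁻¹‖ ≤ 2ⁿ` by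
`uₙ₊₁ = uₙ + α (1 - α)ⁿ (eᵢ - 1)`. Writing `c` for the `A`-part of `uₙ⁻¹`,
`uₙ⁻¹ (eᵢ - 1) = (1 - α)⁻ⁿ (eᵢ - 1) + (c eᵢ - c)` and `c eᵢ → c`, so for `i` far enough along `l`
a Neumann series inverts `uₙ₊₁` with `‖uₙ₊₁⁻¹‖ ≤ 2 ‖uₙ⁻¹‖`, and
`uₙ₊₁⁻¹ m - uₙ⁻¹ m = -α (1 - α)ⁿ uₙ₊₁⁻¹ (eᵢ wₙ - wₙ)` with `wₙ = uₙ⁻¹ m` is at most `2⁻ⁿ`.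
Both `aₙ` and `uₙ⁻¹ m` are then geometrically Cauchy, with limits `a` and `m'`, and
`m = uₙ (uₙ⁻¹ m) = (1 - α)ⁿ uₙ⁻¹ m + aₙ (uₙ⁻¹ m) → a m'`. -/

open Filter Topology WithLp

theorem Units.exists_val_eq_add_norm_inv_le {R : Type*} [NormedRing R] [NormOneClass R]
    [HasSummableGeomSeries R] (u : Rˣ) (y : R) (h : ‖(↑u⁻¹ : R) * y‖ < 1) :
    ∃ v : Rˣ, (v : R) = u + y ∧ ‖(↑v⁻¹ : R)‖ ≤ (1 - ‖(↑u⁻¹ : R) * y‖)⁻¹ * ‖(↑u⁻¹ : R)‖ := by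
  have h' : ‖-((↑u⁻¹ : R) * y)‖ < 1 := by rwa [norm_neg]
  refine ⟨u * Units.oneSub _ h', by simp [mul_add], ?_⟩
  rw [mul_inv_rev, Units.val_mul]
  refine (norm_mul_le _ _).trans (mul_le_mul_of_nonneg_right ?_ (norm_nonneg _))
  exact (tsum_geometric_le_of_norm_lt_one _ h').trans_eq (by simp)

section CohenFactorization

variable {A : Type*} [NonUnitalNormedCommRing A] [NormedSpace ℂ A]
    [IsScalarTower ℂ A A] [SMulCommClass ℂ A A]

local notation "𝔹" => WithLp 1 (Unitization ℂ A)

@[simp] theorem ofLp_one : ofLp (1 : 𝔹) = 1 := rfl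

instance : NormOneClass 𝔹 := ⟨by simp [unitization_norm_def]⟩

theorem norm_mul_inr_sub_one_le (x : 𝔹) (e : A) :
    ‖x * (toLp 1 (e : Unitization ℂ A) - 1)‖ ≤
      ‖(ofLp x).fst‖ * (1 + ‖e‖) + ‖(ofLp x).snd * e - (ofLp x).snd‖ := by
  set c := (ofLp x).snd
  have hfst : (ofLp (x * (toLp 1 (e : Unitization ℂ A) - 1))).fst = -(ofLp x).fst := by
    simp [sub_eq_add_neg]
  have hsnd : (ofLp (x * (toLp 1 (e : Unitization ℂ A) - 1))).snd =
      (ofLp x).fst • e + (c * e - c) := by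
    simp [sub_eq_add_neg]; abel
  rw [unitization_norm_def, hfst, hsnd, norm_neg, mul_one_add, add_assoc, ← norm_smul]
  gcongr
  exact norm_add_le _ _

theorem fst_ofLp_inv_eq_inv {u : 𝔹ˣ} {z : ℂ} (hu : (ofLp (u : 𝔹)).fst = z) :
    (ofLp (↑u⁻¹ : 𝔹)).fst = z⁻¹ := by
  refine eq_inv_of_mul_eq_one_right ?_
  rw [← hu, ← Unitization.fst_mul, ← unitization_mul, u.mul_inv]
  rfl

theorem exists_unit_eq_add_smul_inr_sub_one [CompleteSpace A] {α C s : ℝ} (hα : 0 ≤ α)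
    (hαC : α * (C + 2) ≤ 1 / 2) (hs : 0 < s) {u : 𝔹ˣ} (hu : (ofLp (u : 𝔹)).fst = s) {e : A}
    (he : ‖e‖ ≤ C) (hec : ‖(ofLp (↑u⁻¹ : 𝔹)).snd * e - (ofLp (↑u⁻¹ : 𝔹)).snd‖ ≤ s⁻¹) :
    ∃ v : 𝔹ˣ, (v : 𝔹) = u + ((α * s : ℝ) : ℂ) • (toLp 1 (e : Unitization ℂ A) - 1) ∧
      ‖(↑v⁻¹ : 𝔹)‖ ≤ 2 * ‖(↑u⁻¹ : 𝔹)‖ := by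
  have hsmall :
      ‖(↑u⁻¹ : 𝔹) * (((α * s : ℝ) : ℂ) • (toLp 1 (e : Unitization ℂ A) - 1))‖ ≤ 1 / 2 := by
    rw [mul_smul_comm, norm_smul, Complex.norm_real, Real.norm_of_nonneg (by positivity)]
    calc α * s * ‖(↑u⁻¹ : 𝔹) * (toLp 1 (e : Unitization ℂ A) - 1)‖
        ≤ α * s * (s⁻¹ * (1 + C) + s⁻¹) := by
          gcongr
          refine (norm_mul_inr_sub_one_le _ e).trans ?_
          rw [fst_ofLp_inv_eq_inv hu, norm_inv, Complex.norm_real, Real.norm_of_nonneg hs.le]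
          gcongr
      _ = α * (C + 2) := by field_simp; ring
      _ ≤ 1 / 2 := hαC
  obtain ⟨v, hv, hvinv⟩ := Units.exists_val_eq_add_norm_inv_le u _ (hsmall.trans_lt (by norm_num))
  refine ⟨v, hv, hvinv.trans (mul_le_mul_of_nonneg_right ?_ (norm_nonneg _))⟩
  rw [inv_le_iff_one_le_mul₀ (by linarith)]
  linarith

variable {M : Type*} [NormedAddCommGroup M] [NormedSpace ℂ M]
  (act : A →L[ℂ] M →L[ℂ] M) (hact_mul : ∀ a b : A, act (a * b) = (act a).comp (act b))

noncomputable def unitizationAct : 𝔹 →ₐ[ℂ] (M →L[ℂ] M) :=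
  (Unitization.lift
    { toFun := act, map_smul' := act.map_smul, map_zero' := act.map_zero,
      map_add' := act.map_add, map_mul' := hact_mul }).comp
    (WithLp.unitizationAlgEquiv ℂ).toAlgHom

local notation "ρ" => unitizationAct act hact_mul

theorem unitizationAct_apply (x : 𝔹) (v : M) :
    ρ x v = (ofLp x).fst • v + act (ofLp x).snd v := by
  simp [unitizationAct, Algebra.algebraMap_eq_smul_one]

theorem norm_unitizationAct_apply_le (hact_norm : ∀ (a : A) (m : M), ‖act a m‖ ≤ ‖a‖ * ‖m‖)
    (x : 𝔹) (v : M) : ‖ρ x v‖ ≤ ‖x‖ * ‖v‖ := by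
  rw [unitizationAct_apply, unitization_norm_def, add_mul, ← norm_smul]
  exact (norm_add_le _ _).trans (add_le_add le_rfl (hact_norm _ _))

theorem unitizationAct_inr_sub_one (e : A) (v : M) :
    ρ (toLp 1 (e : Unitization ℂ A) - 1) v = act e v - v := by
  simp [unitizationAct_apply, sub_eq_add_neg]

theorem eq_act_of_tendsto {β : Type*} {F : Filter β} [F.NeBot] {u : β → 𝔹ˣ} {a : A} {m m' : M}
    (hfst : Tendsto (fun n => (ofLp (u n : 𝔹)).fst) F (𝓝 0))
    (hsnd : Tendsto (fun n => (ofLp (u n : 𝔹)).snd) F (𝓝 a))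
    (hm : Tendsto (fun n => ρ ↑(u n)⁻¹ m) F (𝓝 m')) : m = act a m' := by
  have hlim : Tendsto (fun n => ρ (u n) (ρ ↑(u n)⁻¹ m)) F (𝓝 (act a m')) := by
    simpa [unitizationAct_apply] using
      (hfst.smul hm).add ((act.continuous₂.tendsto (a, m')).comp (hsnd.prodMk_nhds hm))
  have hconst : ∀ n, ρ (u n) (ρ ↑(u n)⁻¹ m) = m := fun n => by
    rw [← mul_apply_eq_comp, ← map_mul, Units.mul_inv, map_one, one_apply_eq_self]
  simp only [hconst] at hlim
  exact tendsto_nhds_unique tendsto_const_nhds hlim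

variable {ι : Type*} {l : Filter ι} [l.NeBot] {e : ι → A} {C : ℝ}

theorem exists_cohen_step [CompleteSpace A]
    (hact_norm : ∀ (a : A) (m : M), ‖act a m‖ ≤ ‖a‖ * ‖m‖) (he : ∀ i, ‖e i‖ ≤ C)
    (hbai : ∀ a : A, Tendsto (fun i => e i * a) l (𝓝 a))
    (hmod : ∀ m : M, Tendsto (fun i => act (e i) m) l (𝓝 m))
    {α : ℝ} (hα₀ : 0 < α) (hα₁ : α < 1) (hαC : α * (C + 2) ≤ 1 / 2) (m : M) (n : ℕ) (u : 𝔹ˣ)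
    (hu : (ofLp (u : 𝔹)).fst = ((1 - α) ^ n : ℝ) ∧ ‖(↑u⁻¹ : 𝔹)‖ ≤ 2 ^ n) {ε : ℝ} (hε : 0 < ε) :
    ∃ u' : 𝔹ˣ, ((ofLp (u' : 𝔹)).fst = ((1 - α) ^ (n + 1) : ℝ) ∧ ‖(↑u'⁻¹ : 𝔹)‖ ≤ 2 ^ (n + 1)) ∧
      dist (ofLp (u : 𝔹)).snd (ofLp (u' : 𝔹)).snd ≤ α * C * (1 - α) ^ n ∧
      dist (ρ ↑u⁻¹ m) (ρ ↑u'⁻¹ m) ≤ ε := by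
  set s := (1 - α) ^ n
  have hs : 0 < s := pow_pos (by linarith) n
  set c := (ofLp (↑u⁻¹ : 𝔹)).snd
  set w := ρ ↑u⁻¹ m
  set δ := ε / (α * s * 2 ^ (n + 1))
  have hδ : 0 < δ := by positivity
  obtain ⟨i, hic, hiw⟩ : ∃ i, ‖e i * c - c‖ < s⁻¹ ∧ ‖act (e i) w - w‖ < δ :=
    (((tendsto_iff_norm_sub_tendsto_zero.1 (hbai c)).eventually (gt_mem_nhds (inv_pos.2 hs))).and
      ((tendsto_iff_norm_sub_tendsto_zero.1 (hmod w)).eventually (gt_mem_nhds hδ))).exists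
  set y : 𝔹 := toLp 1 (e i : Unitization ℂ A) - 1
  obtain ⟨u', hu', hu'inv⟩ := exists_unit_eq_add_smul_inr_sub_one hα₀.le hαC hs hu.1 (he i)
    (by rw [mul_comm]; exact hic.le)
  have hinv' : ‖(↑u'⁻¹ : 𝔹)‖ ≤ 2 ^ (n + 1) := by rw [pow_succ]; linarith [hu.2]
  refine ⟨u', ⟨?_, hinv'⟩, ?_, ?_⟩
  · simp [hu', hu.1, s, sub_eq_add_neg]
    ring
  · rw [dist_eq_norm, hu']
    simp [sub_eq_add_neg, norm_smul, abs_of_pos hα₀, abs_of_pos hs]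
    rw [mul_right_comm α C s]
    gcongr
    exact he i
  · have hdiff : (↑u'⁻¹ : 𝔹) - ↑u⁻¹ = -((α * s : ℝ) : ℂ) • (↑u'⁻¹ * y * ↑u⁻¹) := by
      have hinvdiff : (↑u'⁻¹ : 𝔹) - ↑u⁻¹ = ↑u'⁻¹ * (↑u - ↑u') * ↑u⁻¹ := by
        simp [mul_sub, sub_mul, mul_assoc]
      rw [hinvdiff, hu', sub_add_cancel_left, neg_smul, mul_neg, neg_mul, mul_smul_comm,
        smul_mul_assoc]
    calc dist w (ρ ↑u'⁻¹ m) = ‖ρ (↑u'⁻¹ - ↑u⁻¹) m‖ := by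
          rw [dist_comm, dist_eq_norm, map_sub]; rfl
      _ = α * s * ‖ρ ↑u'⁻¹ (act (e i) w - w)‖ := by
          rw [hdiff, map_smul, map_mul, map_mul, smul_apply, mul_apply_eq_comp, mul_apply_eq_comp,
            unitizationAct_inr_sub_one, norm_smul, norm_neg, Complex.norm_real,
            Real.norm_of_nonneg (by positivity)]
      _ ≤ α * s * (2 ^ (n + 1) * δ) := by
          gcongr
          exact (norm_unitizationAct_apply_le act hact_mul hact_norm _ _).trans
            (mul_le_mul hinv' hiw.le (norm_nonneg _) (by positivity))
      _ = ε := by simp only [δ]; field_simp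

theorem exists_cohen_seq [CompleteSpace A]
    (hact_norm : ∀ (a : A) (m : M), ‖act a m‖ ≤ ‖a‖ * ‖m‖) (he : ∀ i, ‖e i‖ ≤ C)
    (hbai : ∀ a : A, Tendsto (fun i => e i * a) l (𝓝 a))
    (hmod : ∀ m : M, Tendsto (fun i => act (e i) m) l (𝓝 m)) (hC : 0 < C) (m : M) :
    ∃ u : ℕ → 𝔹ˣ, Tendsto (fun n => (ofLp (u n : 𝔹)).fst) atTop (𝓝 0) ∧
      CauchySeq (fun n => (ofLp (u n : 𝔹)).snd) ∧ CauchySeq (fun n => ρ ↑(u n)⁻¹ m) := by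
  set α : ℝ := 1 / (2 * (C + 2))
  have hα₀ : 0 < α := by positivity
  have hαC : α * (C + 2) = 1 / 2 := by simp only [α]; field_simp
  have hα₁ : α < 1 := by nlinarith
  choose! next hnext hsnd hvec using fun n u hu =>
    exists_cohen_step act hact_mul hact_norm he hbai hmod hα₀ hα₁ hαC.le m n u hu
      (pow_pos (by norm_num : (0 : ℝ) < 1 / 2) n)
  obtain ⟨u, hu_zero, hu_succ⟩ : ∃ u : ℕ → 𝔹ˣ, u 0 = 1 ∧ ∀ n, u (n + 1) = next n (u n) :=
    ⟨fun n => Nat.rec 1 next n, rfl, fun _ => rfl⟩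
  have hu : ∀ n, (ofLp (u n : 𝔹)).fst = ((1 - α) ^ n : ℝ) ∧ ‖(↑(u n)⁻¹ : 𝔹)‖ ≤ 2 ^ n := by
    intro n
    induction n with
    | zero => simp [hu_zero]
    | succ n ih => exact hu_succ n ▸ hnext n (u n) ih
  refine ⟨u, ?_, cauchySeq_of_le_geometric (1 - α) (α * C) (by linarith)
    fun n => hu_succ n ▸ hsnd n (u n) (hu n), cauchySeq_of_le_geometric (1 / 2) 1 (by norm_num)
    fun n => by simpa [hu_succ] using hvec n (u n) (hu n)⟩
  have hr : ‖((1 - α : ℝ) : ℂ)‖ < 1 := by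
    rw [Complex.norm_real, Real.norm_of_nonneg (by linarith)]
    linarith
  simpa [(hu _).1] using tendsto_pow_atTop_nhds_zero_of_norm_lt_one hr

end CohenFactorization

/-- Cohen's factorization theorem: if `A` is a commutative Banach algebra with a bounded
approximate identity `(e i)` and `M` is a Banach `A`-module (with contractive action `act`)
on which the approximate identity acts as an approximate identity, then every element of `M`
factors as `a • m` with `a ∈ A`, `m ∈ M`. -/
theorem stmt2 {A M ι : Type*} [NonUnitalNormedCommRing A] [NormedSpace ℂ A]
    [IsScalarTower ℂ A A] [SMulCommClass ℂ A A] [CompleteSpace A]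
    [NormedAddCommGroup M] [NormedSpace ℂ M] [CompleteSpace M]
    (act : A →L[ℂ] M →L[ℂ] M)
    (hact_mul : ∀ a b : A, act (a * b) = (act a).comp (act b))
    (hact_norm : ∀ (a : A) (m : M), ‖act a m‖ ≤ ‖a‖ * ‖m‖)
    (l : Filter ι) [l.NeBot] (e : ι → A) (C : ℝ) (hC : 0 < C) (he : ∀ i, ‖e i‖ ≤ C)
    (hbai : ∀ a : A, Tendsto (fun i => e i * a) l (nhds a))
    (hmod : ∀ m : M, Tendsto (fun i => act (e i) m) l (nhds m)) :
    ∀ m : M, ∃ (a : A) (m' : M), m = act a m' := by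
  intro m
  obtain ⟨u, hfst, hsnd, hvec⟩ := exists_cohen_seq act hact_mul hact_norm he hbai hmod hC m
  obtain ⟨a, ha⟩ := cauchySeq_tendsto_of_complete hsnd
  obtain ⟨m', hm'⟩ := cauchySeq_tendsto_of_complete hvec
  exact ⟨a, m', eq_act_of_tendsto act hact_mul hfst ha hm'⟩
end

section
/- Let G be a group, H a Hilbert space, σ : G → U(H) a unitary representation (as a group homomorphism), V, W : H → K bounded operators into a Hilbert space K, λ : G → U(H) another unitary representation, and f : G → ℂ a function satisfying f(x)·λ(x) = V* σ(x) W for all x ∈ G. Fix a unit vector ξ ∈ H and define L(x) = σ(x⁻¹) V λ(x) ξ and R(x) = σ(x⁻¹) W λ(x) ξ. Then ⟨L(x), R(y)⟩ = f(x y⁻¹) for all x, y ∈ G. -/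
/-!
Move `σ(x⁻¹)` across the inner product as `σ(x)`, so that `⟨L x, R y⟩ = ⟨V λ(x)ξ, σ(x y⁻¹) W λ(y)ξ⟩`;
the adjoint of `V` then turns this into `⟨λ(x)ξ, f(x y⁻¹) λ(x y⁻¹) λ(y)ξ⟩ = f(x y⁻¹) ‖λ(x)ξ‖²`,
and `λ(x)` is an isometry.
-/

section

open ContinuousLinearMap

variable {𝕜 G H K : Type*} [RCLike 𝕜] [Group G]
  [NormedAddCommGroup H] [InnerProductSpace 𝕜 H] [CompleteSpace H]
  [NormedAddCommGroup K] [InnerProductSpace 𝕜 K] [CompleteSpace K]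

theorem unitary_map_mul_apply (ρ : G →* unitary (K →L[𝕜] K)) (g h : G) (v : K) :
    (ρ (g * h) : K →L[𝕜] K) v = (ρ g : K →L[𝕜] K) ((ρ h : K →L[𝕜] K) v) := by
  rw [map_mul, Submonoid.coe_mul, mul_apply_eq_comp]

theorem inner_unitary_map_inv_map_inv (ρ : G →* unitary (K →L[𝕜] K)) (x y : G) (a b : K) :
    inner 𝕜 ((ρ x⁻¹ : K →L[𝕜] K) a) ((ρ y⁻¹ : K →L[𝕜] K) b)
      = inner 𝕜 a ((ρ (x * y⁻¹) : K →L[𝕜] K) b) := by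
  rw [← Unitary.inner_map_map (ρ x), ← unitary_map_mul_apply, ← unitary_map_mul_apply,
    mul_inv_cancel, map_one, Submonoid.coe_one, one_apply_eq_self]

theorem inner_apply_apply_of_smul_eq_adjoint_comp {V W : H →L[𝕜] K} {T : H →L[𝕜] H}
    {S : K →L[𝕜] K} {c : 𝕜} (h : c • T = adjoint V ∘L S ∘L W) (u v : H) :
    inner 𝕜 (V u) (S (W v)) = c * inner 𝕜 u (T v) := by
  rw [← adjoint_inner_right, ← comp_apply S, ← comp_apply (adjoint V), ← h, smul_apply,
    inner_smul_right]

end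

/-- Let `λ : G → U(H)` and `σ : G → U(K)` be unitary representations, `V, W : H → K` bounded
operators and `f : G → ℂ` with `f(x)·λ(x) = V* σ(x) W` for all `x`.  For a unit vector
`ξ ∈ H`, setting `L(x) = σ(x⁻¹) V λ(x) ξ` and `R(x) = σ(x⁻¹) W λ(x) ξ`, one has
`⟨L(x), R(y)⟩ = f(x y⁻¹)` for all `x, y ∈ G`. -/
theorem stmt6 {G H K : Type*} [Group G]
    [NormedAddCommGroup H] [InnerProductSpace ℂ H] [CompleteSpace H]
    [NormedAddCommGroup K] [InnerProductSpace ℂ K] [CompleteSpace K]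
    (lam : G →* unitary (H →L[ℂ] H)) (sig : G →* unitary (K →L[ℂ] K))
    (V W : H →L[ℂ] K) (f : G → ℂ)
    (hf : ∀ x : G, f x • (lam x : H →L[ℂ] H)
      = (ContinuousLinearMap.adjoint V).comp (((sig x : K →L[ℂ] K)).comp W))
    (ξ : H) (hξ : ‖ξ‖ = 1) :
    ∀ x y : G,
      (inner ℂ ((sig x⁻¹ : K →L[ℂ] K) (V ((lam x : H →L[ℂ] H) ξ)))
             ((sig y⁻¹ : K →L[ℂ] K) (W ((lam y : H →L[ℂ] H) ξ))) : ℂ)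
        = f (x * y⁻¹) := by
  intro x y
  rw [inner_unitary_map_inv_map_inv, inner_apply_apply_of_smul_eq_adjoint_comp (hf _),
    ← unitary_map_mul_apply, inv_mul_cancel_right, Unitary.inner_map_map,
    inner_self_eq_norm_sq_to_K, hξ]
  simp
end
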